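/- Let G be a connected graph on n₀ vertices with a triangle-factor, and suppose |E(G)| = (4/3)·n₀ − 1. Then for any two distinct triangles Tᵢ, Tⱼ of the triangle-factor, there is at most one edge of G between V(Tᵢ) and V(Tⱼ), and the auxiliary graph H on the triangles (with Tᵢ ~ Tⱼ iff some edge of G joins them) is a tree. -/

import Mathlib

/-! The triangles of the factor span exactly `n₀` edges of `G`, so exactly `n₀ / 3 - 1` edges run
between distinct triangles. These crossing edges map onto the edges of `H`, and `H` is connected
because `G` is, so `H` has at least `n₀ / 3 - 1` edges. Hence the count is exact: `H` is a tree,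
and the map from crossing edges to edges of `H` is injective, which says that two triangles are
joined by at most one edge. -/

open SimpleGraph Finset

def IsTriangleFactor {V : Type*} [DecidableEq V] (G : SimpleGraph V) (P : Finset (Finset V)) : Prop :=
  (∀ t ∈ P, G.IsNClique 3 t) ∧ (∀ v : V, ∃! t, t ∈ P ∧ v ∈ t)

namespace SimpleGraph

variable {V W : Type*} {G : SimpleGraph V} {f : V → W}

theorem Connected.map_of_surjective (hG : G.Connected) (hf : Function.Surjective f) :
    (G.map f).Connected := by
  have : Nonempty W := hG.nonempty.map f
  refine Connected.mk fun a b => ?_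
  obtain ⟨u, rfl⟩ := hf a
  obtain ⟨v, rfl⟩ := hf b
  rw [reachable_iff_reflTransGen]
  refine ((reachable_iff_reflTransGen u v).1 (hG.preconnected u v)).lift' f fun x y hxy => ?_
  by_cases hfxy : f x = f y
  · simp only [Function.onFun, hfxy, Relation.ReflTransGen.refl]
  · exact .single (map_adj_apply' hxy hfxy)

theorem edgeSet_map_eq_image :
    (G.map f).edgeSet = Sym2.map f '' {e ∈ G.edgeSet | ¬(e.map f).IsDiag} := by
  ext e
  induction e using Sym2.ind with
  | _ a b =>
    simp only [mem_edgeSet, map_adj', Set.mem_image, Set.mem_ofPred_eq, Sym2.exists,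
      Sym2.map_mk, Sym2.mk_isDiag_iff, Sym2.eq_iff]
    constructor
    · rintro ⟨hab, u, v, huv, rfl, rfl⟩
      exact ⟨u, v, ⟨huv, hab⟩, .inl ⟨rfl, rfl⟩⟩
    · rintro ⟨u, v, ⟨huv, hne⟩, ⟨rfl, rfl⟩ | ⟨rfl, rfl⟩⟩
      · exact ⟨hne, u, v, huv, rfl, rfl⟩
      · exact ⟨Ne.symm hne, v, u, huv.symm, rfl, rfl⟩

variable [Fintype V] [DecidableRel G.Adj] [DecidableEq W]

theorem edgeFinset_map_eq_image [Fintype (G.map f).edgeSet] :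
    (G.map f).edgeFinset = {e ∈ G.edgeFinset | ¬(e.map f).IsDiag}.image (Sym2.map f) := by
  rw [← coe_inj, coe_edgeFinset, edgeSet_map_eq_image, coe_image, coe_filter]
  simp

theorem Connected.isTree_map_of_card_le [Fintype W] (hG : G.Connected)
    (hf : Function.Surjective f)
    (hcard : #{e ∈ G.edgeFinset | ¬(e.map f).IsDiag} + 1 ≤ Fintype.card W) :
    (G.map f).IsTree ∧
      Set.InjOn (Sym2.map f) ({e ∈ G.edgeFinset | ¬(e.map f).IsDiag} : Finset (Sym2 V)) := by
  classical
  have hconn := hG.map_of_surjective hf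
  have hlower := hconn.card_vert_le_card_edgeSet_add_one
  rw [Nat.card_eq_fintype_card, Nat.card_eq_fintype_card, ← edgeFinset_card] at hlower
  have hupper : #(G.map f).edgeFinset ≤ #{e ∈ G.edgeFinset | ¬(e.map f).IsDiag} := by
    rw [edgeFinset_map_eq_image]
    exact card_image_le
  refine ⟨isTree_iff_connected_and_card.2 ⟨hconn, ?_⟩, card_image_iff.1 ?_⟩
  · rw [Nat.card_eq_fintype_card, Nat.card_eq_fintype_card, ← edgeFinset_card]
    omega
  · rw [← edgeFinset_map_eq_image]
    omega

theorem eq_and_eq_of_injOn_map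
    (hinj : Set.InjOn (Sym2.map f) ({e ∈ G.edgeFinset | ¬(e.map f).IsDiag} : Finset (Sym2 V)))
    {x₁ y₁ x₂ y₂ : V} (h₁ : G.Adj x₁ y₁) (h₂ : G.Adj x₂ y₂) (hx : f x₁ = f x₂) (hy : f y₁ = f y₂)
    (hxy : f x₁ ≠ f y₁) : x₁ = x₂ ∧ y₁ = y₂ := by
  have hmem₁ : s(x₁, y₁) ∈ {e ∈ G.edgeFinset | ¬(e.map f).IsDiag} := by simp [h₁, hxy]
  have hmem₂ : s(x₂, y₂) ∈ {e ∈ G.edgeFinset | ¬(e.map f).IsDiag} := by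
    simp [h₂, ← hx, ← hy, hxy]
  rcases Sym2.eq_iff.1 (hinj hmem₁ hmem₂ (by simp only [Sym2.map_mk, hx, hy])) with h | ⟨rfl, rfl⟩
  · exact h
  · exact absurd hx hxy

theorem card_filter_isDiag_map_edgeFinset [DecidableEq V] [Fintype W]
    (hf : ∀ w, G.IsClique (f ⁻¹' {w})) :
    #{e ∈ G.edgeFinset | (e.map f).IsDiag} = ∑ w, (#{v | f v = w}).choose 2 := by
  have hunion : {e ∈ G.edgeFinset | (e.map f).IsDiag} =
      univ.biUnion fun w => {e ∈ ({v | f v = w} : Finset V).sym2 | ¬e.IsDiag} := by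
    ext e
    induction e using Sym2.ind with
    | _ u v =>
      simp only [mem_filter, mem_edgeFinset, mem_edgeSet, Sym2.map_mk, Sym2.mk_isDiag_iff,
        mem_biUnion, mem_univ, true_and, Finset.mk_mem_sym2_iff]
      constructor
      · rintro ⟨huv, hf⟩
        exact ⟨f u, ⟨rfl, hf.symm⟩, huv.ne⟩
      · rintro ⟨w, ⟨rfl, hvu⟩, hne⟩
        exact ⟨hf (f u) rfl hvu hne, hvu.symm⟩
  rw [hunion, card_biUnion]
  · refine sum_congr rfl fun w _ => ?_
    rw [sym2_eq_image, Sym2.filter_image_mk_not_isDiag, Sym2.card_image_offDiag]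
  · intro w₁ _ w₂ _ hne
    refine Finset.disjoint_left.2 fun e he₁ he₂ => ?_
    induction e using Sym2.ind with
    | _ u v =>
      simp only [mem_filter, Finset.mk_mem_sym2_iff, mem_univ, true_and] at he₁ he₂
      exact hne (he₁.1.1.symm.trans he₂.1.1)

end SimpleGraph

namespace IsTriangleFactor

variable {V : Type*} [DecidableEq V] {G : SimpleGraph V} {P : Finset (Finset V)}

noncomputable def triangleOf (hP : IsTriangleFactor G P) (v : V) : P :=
  ⟨(hP.2 v).exists.choose, (hP.2 v).exists.choose_spec.1⟩

variable (hP : IsTriangleFactor G P)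

theorem triangleOf_eq_iff {v : V} {t : P} : hP.triangleOf v = t ↔ v ∈ t.1 := by
  have hmem : v ∈ (hP.triangleOf v).1 := (hP.2 v).exists.choose_spec.2
  refine ⟨fun h => h ▸ hmem, fun hv => Subtype.ext ?_⟩
  exact (hP.2 v).unique ⟨(hP.triangleOf v).2, hmem⟩ ⟨t.2, hv⟩

theorem triangleOf_surjective : Function.Surjective hP.triangleOf := fun t => by
  obtain ⟨v, hv⟩ := card_pos.1 (((hP.1 t t.2).card_eq).symm ▸ three_pos)
  exact ⟨v, (hP.triangleOf_eq_iff).2 hv⟩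

theorem filter_triangleOf_eq [Fintype V] (t : P) :
    ({v | hP.triangleOf v = t} : Finset V) = t.1 := by
  ext v
  simp [hP.triangleOf_eq_iff]

theorem card_eq [Fintype V] (hP : IsTriangleFactor G P) : Fintype.card V = 3 * #P := by
  calc Fintype.card V = ∑ t : P, #{v | hP.triangleOf v = t} :=
        card_eq_sum_card_fiberwise fun _ _ => mem_univ _
    _ = ∑ _t : P, 3 := by simp only [hP.filter_triangleOf_eq, (hP.1 _ (Subtype.prop _)).card_eq]
    _ = 3 * #P := by simp [mul_comm]

theorem card_filter_isDiag_map_triangleOf [Fintype V] [DecidableRel G.Adj] :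
    #{e ∈ G.edgeFinset | (e.map hP.triangleOf).IsDiag} = 3 * #P := by
  rw [card_filter_isDiag_map_edgeFinset fun t => ?_]
  · simp [hP.filter_triangleOf_eq, (hP.1 _ (Subtype.prop _)).card_eq, mul_comm]
  · convert (hP.1 t t.2).isClique
    ext v
    simp [hP.triangleOf_eq_iff]

theorem map_triangleOf_eq :
    G.map hP.triangleOf = fromRel fun t₁ t₂ : P => ∃ x ∈ t₁.1, ∃ y ∈ t₂.1, G.Adj x y := by
  ext t₁ t₂
  simp only [map_adj', fromRel_adj, hP.triangleOf_eq_iff]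
  constructor
  · rintro ⟨hne, x, y, hxy, hx, hy⟩
    exact ⟨hne, .inl ⟨x, hx, y, hy, hxy⟩⟩
  · rintro ⟨hne, ⟨x, hx, y, hy, hxy⟩ | ⟨y, hy, x, hx, hyx⟩⟩
    · exact ⟨hne, x, y, hxy, hx, hy⟩
    · exact ⟨hne, x, y, hyx.symm, hx, hy⟩

end IsTriangleFactor

theorem stmt4 {V : Type*} [Fintype V] [DecidableEq V] (G : SimpleGraph V) [DecidableRel G.Adj]
    (n₀ : ℕ) (hn : Fintype.card V = n₀) (hconn : G.Connected)
    (P : Finset (Finset V)) (hP : IsTriangleFactor G P)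
    (hE : 3 * G.edgeFinset.card + 3 = 4 * n₀) :
    (∀ t₁ ∈ P, ∀ t₂ ∈ P, t₁ ≠ t₂ →
      ∀ x₁ ∈ t₁, ∀ y₁ ∈ t₂, ∀ x₂ ∈ t₁, ∀ y₂ ∈ t₂,
        G.Adj x₁ y₁ → G.Adj x₂ y₂ → x₁ = x₂ ∧ y₁ = y₂) ∧
    (SimpleGraph.fromRel
      (fun t₁ t₂ : {x // x ∈ P} => ∃ x ∈ t₁.1, ∃ y ∈ t₂.1, G.Adj x y)).IsTree := by
  have hcross : #{e ∈ G.edgeFinset | ¬(e.map hP.triangleOf).IsDiag} + 1 = #P := by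
    have hsplit := card_filter_add_card_filter_not (s := G.edgeFinset)
      fun e => (e.map hP.triangleOf).IsDiag
    have hinner := hP.card_filter_isDiag_map_triangleOf
    have hV := hP.card_eq
    omega
  obtain ⟨htree, hinj⟩ :=
    hconn.isTree_map_of_card_le hP.triangleOf_surjective (by rw [Fintype.card_coe, hcross])
  rw [← hP.map_triangleOf_eq]
  refine ⟨fun t₁ h₁ t₂ h₂ hne x₁ hx₁ y₁ hy₁ x₂ hx₂ y₂ hy₂ hxy₁ hxy₂ => ?_, htree⟩
  have htriangle : ∀ {t} (ht : t ∈ P) {v}, v ∈ t → hP.triangleOf v = ⟨t, ht⟩ :=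
    @fun _ _ _ hv => hP.triangleOf_eq_iff.2 hv
  refine eq_and_eq_of_injOn_map hinj hxy₁ hxy₂ ?_ ?_ ?_
  · rw [htriangle h₁ hx₁, htriangle h₁ hx₂]
  · rw [htriangle h₂ hy₁, htriangle h₂ hy₂]
  · rw [htriangle h₁ hx₁, htriangle h₂ hy₁]
    exact fun h => hne (congrArg Subtype.val h)
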